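/- arXiv:2309.14357 — 2 statements merged into one kernel-verified Lean document; each statement's English description precedes it below -/
import Mathlib

section
/- The extreme rays of the cone {λI_k ⊕ X : X ∈ M_{n−k}(ℝ), λ ≥ s₁(X)} include every ray spanned by I_k ⊕ P with P an orthogonal matrix; that is, if I_k ⊕ P = ½(αI_k ⊕ X + βI_k ⊕ Y) with both summands in the cone, then αI_k ⊕ X and βI_k ⊕ Y are nonnegative multiples of I_k ⊕ P. -/
open Matrix
open scoped ComplexOrder

/-- Singular values of a square matrix over ℝ or ℂ, in decreasing order:
`sv A i` is the `(i+1)`-st largest singular value. -/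
noncomputable def sv {𝕜 : Type*} [RCLike 𝕜] {n : ℕ} (A : Matrix (Fin n) (Fin n) 𝕜)
    (i : Fin n) : ℝ :=
  Real.sqrt (((Matrix.isHermitian_conjTranspose_mul_self A).eigenvalues ∘
    Tuple.sort ((Matrix.isHermitian_conjTranspose_mul_self A).eigenvalues)) i.rev)

/-- `svN A j` is `s_{j+1}(A)`, with junk value `0` out of range. -/
noncomputable def svN {𝕜 : Type*} [RCLike 𝕜] {n : ℕ} (A : Matrix (Fin n) (Fin n) 𝕜)
    (j : ℕ) : ℝ :=
  if h : j < n then sv A ⟨j, h⟩ else 0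

/-- The Ky-Fan `k`-norm: sum of the `k` largest singular values. -/
noncomputable def kyFan {𝕜 : Type*} [RCLike 𝕜] {n : ℕ} (k : ℕ)
    (A : Matrix (Fin n) (Fin n) 𝕜) : ℝ :=
  ∑ i ∈ Finset.univ.filter (fun i : Fin n => (i : ℕ) < k), sv A i

/-- Parallelism with respect to the Ky-Fan `k`-norm. -/
def KFParallel {𝕜 : Type*} [RCLike 𝕜] {n : ℕ} (k : ℕ)
    (A B : Matrix (Fin n) (Fin n) 𝕜) : Prop :=
  ∃ μ : 𝕜, ‖μ‖ = 1 ∧ kyFan k (A + μ • B) = kyFan k A + kyFan k B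

/-- Block diagonal direct sum `X₁ ⊕ X₂`. -/
def bd {R : Type*} [Zero R] {k m : ℕ} (X₁ : Matrix (Fin k) (Fin k) R)
    (X₂ : Matrix (Fin m) (Fin m) R) : Matrix (Fin (k + m)) (Fin (k + m)) R :=
  Matrix.reindex finSumFinEquiv finSumFinEquiv (Matrix.fromBlocks X₁ 0 0 X₂)

/-- The cone 𝒞 of block matrices `X₁ ⊕ X₂` with `X₁` psd and `s_k(X₁) ≥ s₁(X₂)`. -/
def CC (k m : ℕ) : Set (Matrix (Fin (k + m)) (Fin (k + m)) ℂ) :=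
  {X | ∃ (X₁ : Matrix (Fin k) (Fin k) ℂ) (X₂ : Matrix (Fin m) (Fin m) ℂ), X = bd X₁ X₂ ∧ X₁.PosSemidef ∧ svN X₂ 0 ≤ svN X₁ (k - 1)}

/-- The relative boundary of 𝒞: `X₁` psd with `s_k(X₁) = s₁(X₂)`. -/
def bC (k m : ℕ) : Set (Matrix (Fin (k + m)) (Fin (k + m)) ℂ) :=
  {X | ∃ (X₁ : Matrix (Fin k) (Fin k) ℂ) (X₂ : Matrix (Fin m) (Fin m) ℂ), X = bd X₁ X₂ ∧ X₁.PosSemidef ∧ svN X₂ 0 = svN X₁ (k - 1)}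

/-- `Pert(X)`: elements `Z` of `∂𝒞` with `X ± tZ ∈ 𝒞` for all sufficiently small `t > 0`. -/
def Pert (k m : ℕ) (X : Matrix (Fin (k + m)) (Fin (k + m)) ℂ) :
    Set (Matrix (Fin (k + m)) (Fin (k + m)) ℂ) :=
  {Z | Z ∈ bC k m ∧ ∃ ε : ℝ, 0 < ε ∧ ∀ t : ℝ, 0 < t → t ≤ ε →
    X + t • Z ∈ CC k m ∧ X - t • Z ∈ CC k m}

lemma svN_nonneg {𝕜 : Type*} [RCLike 𝕜] {n : ℕ} (A : Matrix (Fin n) (Fin n) 𝕜) (j : ℕ) :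
    0 ≤ svN A j := by
  unfold svN
  split
  · exact Real.sqrt_nonneg _
  · exact le_refl 0

/-- Each diagonal entry of `AᴴA` is bounded by the square of the largest singular value. -/
lemma diag_le {n : ℕ} (A : Matrix (Fin n) (Fin n) ℝ) (i : Fin n) :
    (Aᴴ * A) i i ≤ (svN A 0) ^ 2 := by
  have hn : 0 < n := i.pos
  set hH := Matrix.isHermitian_conjTranspose_mul_self A with hHdef
  set lam := hH.eigenvalues with hlam
  set σ := Tuple.sort lam with hσ
  have hnn : ∀ j, 0 ≤ lam j := fun j => Matrix.eigenvalues_conjTranspose_mul_self_nonneg A j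
  set top : Fin n := (⟨0, hn⟩ : Fin n).rev with htop
  have hmax : ∀ j, lam j ≤ (lam ∘ σ) top := by
    intro j
    have h1 : lam j = (lam ∘ σ) (σ.symm j) := by simp
    rw [h1]
    refine Tuple.monotone_sort lam ?_
    have : (σ.symm j : ℕ) ≤ n - 1 := Nat.le_sub_one_of_lt (σ.symm j).2
    simp [htop, Fin.le_def, Fin.rev]
    omega
  have hsv : (svN A 0) ^ 2 = (lam ∘ σ) top := by
    have : svN A 0 = sv A ⟨0, hn⟩ := by simp [svN, hn]
    rw [this]
    unfold sv
    exact Real.sq_sqrt (hnn _)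
  rw [hsv]
  set U : Matrix (Fin n) (Fin n) ℝ := (hH.eigenvectorUnitary : Matrix (Fin n) (Fin n) ℝ) with hU
  have hspec := hH.spectral_theorem
  have hrow : ∑ j, (U i j) ^ 2 = 1 := by
    have h2 : U * star U = 1 := (Matrix.mem_unitaryGroup_iff).mp hH.eigenvectorUnitary.2
    have := congrFun (congrFun h2 i) i
    simp [Matrix.mul_apply, Matrix.star_apply, Matrix.one_apply, sq] at this ⊢
    exact this
  have hdiag : (Aᴴ * A) i i = ∑ j, lam j * (U i j) ^ 2 := by
    conv_lhs => rw [hspec]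
    simp [Matrix.mul_apply, Matrix.diagonal_apply, Finset.sum_mul, Matrix.star_apply, sq]
    ring_nf
    congr 1
    ext j
    exact mul_comm _ _
  rw [hdiag]
  calc ∑ j, lam j * (U i j) ^ 2 ≤ ∑ j, (lam ∘ σ) top * (U i j) ^ 2 := by
        apply Finset.sum_le_sum
        intro j _
        exact mul_le_mul_of_nonneg_right (hmax j) (sq_nonneg _)
    _ = (lam ∘ σ) top := by rw [← Finset.mul_sum, hrow, mul_one]

lemma diag_eq_col {n : ℕ} (G : Matrix (Fin n) (Fin n) ℝ) (i : Fin n) :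
    (Gᴴ * G) i i = ∑ j, (G j i) ^ 2 := by
  simp [Matrix.mul_apply, Matrix.conjTranspose_apply, sq]

lemma bd_smul {k m : ℕ} (c : ℝ) (A : Matrix (Fin k) (Fin k) ℝ) (B : Matrix (Fin m) (Fin m) ℝ) :
    bd (c • A) (c • B) = c • bd A B := by
  have hfb : (Matrix.fromBlocks (c • A) (0 : Matrix (Fin k) (Fin m) ℝ) 0 (c • B)) =
      c • Matrix.fromBlocks A 0 0 B := by
    rw [Matrix.fromBlocks_smul, smul_zero, smul_zero]
  unfold bd
  rw [hfb, Matrix.reindex_apply, Matrix.reindex_apply, Matrix.submatrix_smul]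
  rfl

theorem stmt18 (k m : ℕ) (hk : 1 < k) (hm : 0 < m)
    (P : Matrix (Fin m) (Fin m) ℝ) (hP : P ∈ Matrix.orthogonalGroup (Fin m) ℝ)
    (α β : ℝ) (X Y : Matrix (Fin m) (Fin m) ℝ)
    (hX : svN X 0 ≤ α) (hY : svN Y 0 ≤ β)
    (hmid : bd (1 : Matrix (Fin k) (Fin k) ℝ) P =
      ((2 : ℝ)⁻¹) • (bd (α • (1 : Matrix (Fin k) (Fin k) ℝ)) X +
        bd (β • (1 : Matrix (Fin k) (Fin k) ℝ)) Y)) :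
    (∃ c : ℝ, 0 ≤ c ∧ bd (α • (1 : Matrix (Fin k) (Fin k) ℝ)) X =
        c • bd (1 : Matrix (Fin k) (Fin k) ℝ) P) ∧
    (∃ c : ℝ, 0 ≤ c ∧ bd (β • (1 : Matrix (Fin k) (Fin k) ℝ)) Y =
        c • bd (1 : Matrix (Fin k) (Fin k) ℝ) P) := by
  have hα0 : 0 ≤ α := le_trans (svN_nonneg X 0) hX
  have hβ0 : 0 ≤ β := le_trans (svN_nonneg Y 0) hY
  have h2 : ∀ a b : Fin m, P a b = 2⁻¹ * (X a b + Y a b) := by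
    intro a b
    have h := congrFun (congrFun hmid (finSumFinEquiv (Sum.inr a))) (finSumFinEquiv (Sum.inr b))
    simpa [bd] using h
  have h1 : α + β = 2 := by
    have hk0 : 0 < k := by omega
    have h := congrFun (congrFun hmid (finSumFinEquiv (Sum.inl ⟨0, hk0⟩)))
      (finSumFinEquiv (Sum.inl ⟨0, hk0⟩))
    simp only [bd, Matrix.reindex_apply, Matrix.submatrix_apply, Equiv.symm_apply_apply,
      Matrix.fromBlocks_apply₁₁, Matrix.smul_apply, Matrix.add_apply,
      Matrix.one_apply_eq, smul_eq_mul, mul_one] at h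
    linarith
  have hPsP : star P * P = 1 := hP.1
  have hPPs : P * star P = 1 := hP.2
  set E := star P * X with hEdef
  set F := star P * Y with hFdef
  have hXY : X + Y = (2:ℝ) • P := by
    ext a b
    have := h2 a b
    simp only [Matrix.add_apply, Matrix.smul_apply, smul_eq_mul]
    linarith
  have hEF : E + F = (2:ℝ) • (1 : Matrix (Fin m) (Fin m) ℝ) := by
    calc E + F = star P * (X + Y) := (Matrix.mul_add _ _ _).symm
      _ = (2:ℝ) • (star P * P) := by rw [hXY, Matrix.mul_smul]
      _ = (2:ℝ) • 1 := by rw [hPsP]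
  have hcol : ∀ (M : Matrix (Fin m) (Fin m) ℝ), ∀ i : Fin m,
      ∑ j, ((star P * M) j i) ^ 2 ≤ (svN M 0) ^ 2 := by
    intro M i
    have h1' : (star P * M)ᴴ = Mᴴ * P := by
      rw [Matrix.conjTranspose_mul, Matrix.star_eq_conjTranspose,
        Matrix.conjTranspose_conjTranspose]
    have hconj : (star P * M)ᴴ * (star P * M) = Mᴴ * M := by
      calc (star P * M)ᴴ * (star P * M) = (Mᴴ * P) * (star P * M) := by rw [h1']
        _ = Mᴴ * ((P * star P) * M) := by rw [Matrix.mul_assoc, Matrix.mul_assoc]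
        _ = Mᴴ * M := by rw [hPPs, Matrix.one_mul]
    calc ∑ j, ((star P * M) j i) ^ 2 = ((star P * M)ᴴ * (star P * M)) i i :=
          (diag_eq_col _ i).symm
      _ = (Mᴴ * M) i i := by rw [hconj]
      _ ≤ (svN M 0) ^ 2 := diag_le M i
  have hcolE : ∀ i, ∑ j, (E j i) ^ 2 ≤ α ^ 2 := fun i =>
    le_trans (hcol X i) (pow_le_pow_left₀ (svN_nonneg X 0) hX 2)
  have hcolF : ∀ i, ∑ j, (F j i) ^ 2 ≤ β ^ 2 := fun i =>
    le_trans (hcol Y i) (pow_le_pow_left₀ (svN_nonneg Y 0) hY 2)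
  have hsq : ∀ (G : Matrix (Fin m) (Fin m) ℝ) (i j : Fin m), (G j i)^2 ≤ ∑ l, (G l i)^2 :=
    fun G i j => Finset.single_le_sum (f := fun l => (G l i)^2)
      (fun l _ => sq_nonneg _) (Finset.mem_univ j)
  have hdE : ∀ i, E i i ≤ α := by
    intro i
    have := le_trans (hsq E i i) (hcolE i)
    nlinarith
  have hdF : ∀ i, F i i ≤ β := by
    intro i
    have := le_trans (hsq F i i) (hcolF i)
    nlinarith
  have hdsum : ∀ i, E i i + F i i = 2 := by
    intro i
    have h := congrFun (congrFun hEF i) i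
    simpa [Matrix.one_apply] using h
  have hEd : ∀ i, E i i = α := fun i => by have := hdE i; have := hdF i; have := hdsum i; linarith
  have hFd : ∀ i, F i i = β := fun i => by have := hdE i; have := hdF i; have := hdsum i; linarith
  have hoff : ∀ (G : Matrix (Fin m) (Fin m) ℝ) (c : ℝ), (∀ i, G i i = c) →
      (∀ i, ∑ j, (G j i)^2 ≤ c^2) → ∀ j i, j ≠ i → G j i = 0 := by
    intro G c hdc hcc j i hji
    have h0 : ∑ l ∈ Finset.univ.erase i, (G l i)^2 ≤ 0 := by
      have hsplit : (G i i)^2 + ∑ l ∈ Finset.univ.erase i, (G l i)^2 = ∑ l, (G l i)^2 :=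
        Finset.add_sum_erase Finset.univ (fun l => (G l i)^2) (Finset.mem_univ i)
      have hs := hcc i
      rw [hdc i] at hsplit
      linarith
    have hterm : (G j i)^2 ≤ 0 :=
      le_trans (Finset.single_le_sum (f := fun l => (G l i)^2) (fun l _ => sq_nonneg _)
        (Finset.mem_erase.mpr ⟨hji, Finset.mem_univ j⟩)) h0
    have hz : (G j i)^2 = 0 := le_antisymm hterm (sq_nonneg _)
    exact pow_eq_zero_iff (by norm_num) |>.mp hz
  have hE : E = α • (1 : Matrix (Fin m) (Fin m) ℝ) := by
    ext j i
    by_cases h : j = i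
    · subst h; simp [hEd j, Matrix.one_apply]
    · simp [Matrix.one_apply, h, hoff E α hEd hcolE j i h]
  have hF : F = β • (1 : Matrix (Fin m) (Fin m) ℝ) := by
    ext j i
    by_cases h : j = i
    · subst h; simp [hFd j, Matrix.one_apply]
    · simp [Matrix.one_apply, h, hoff F β hFd hcolF j i h]
  have hXP : X = α • P := by
    have hPE : P * E = X := by
      rw [hEdef, ← Matrix.mul_assoc, hPPs, Matrix.one_mul]
    rw [← hPE, hE, Matrix.mul_smul, Matrix.mul_one]
  have hYP : Y = β • P := by
    have hPF : P * F = Y := by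
      rw [hFdef, ← Matrix.mul_assoc, hPPs, Matrix.one_mul]
    rw [← hPF, hF, Matrix.mul_smul, Matrix.mul_one]
  constructor
  · exact ⟨α, hα0, by rw [hXP, ← bd_smul]⟩
  · exact ⟨β, hβ0, by rw [hYP, ← bd_smul]⟩
end

section
/- For real n×n matrices with 1 < k < n and n − k ≥ 3, the real linear span of 𝒮₊ = {a(I_k ⊕ P) : a > 0, P ∈ SO(n−k)} equals ℝI_k ⊕ M_{n−k}(ℝ). -/
open Matrix
open scoped ComplexOrder

set_option maxRecDepth 20000
set_option maxHeartbeats 2000000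

section AuxSpan

variable {k m : ℕ}

lemma aux_bd_add (A C : Matrix (Fin k) (Fin k) ℝ) (B D : Matrix (Fin m) (Fin m) ℝ) :
    bd A B + bd C D = bd (A + C) (B + D) := by
  simp only [bd, Matrix.reindex_apply]
  ext i j
  simp only [Matrix.submatrix_apply, Matrix.add_apply]
  cases h1 : finSumFinEquiv.symm i <;> cases h2 : finSumFinEquiv.symm j <;>
    simp [Matrix.fromBlocks]

lemma aux_bd_smul (r : ℝ) (A : Matrix (Fin k) (Fin k) ℝ) (B : Matrix (Fin m) (Fin m) ℝ) :
    r • bd A B = bd (r • A) (r • B) := by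
  simp only [bd, Matrix.reindex_apply]
  ext i j
  simp only [Matrix.submatrix_apply, Matrix.smul_apply]
  cases h1 : finSumFinEquiv.symm i <;> cases h2 : finSumFinEquiv.symm j <;>
    simp [Matrix.fromBlocks]

lemma aux_bd_zero : bd (0 : Matrix (Fin k) (Fin k) ℝ) (0 : Matrix (Fin m) (Fin m) ℝ) = 0 := by
  simp only [bd, Matrix.reindex_apply]
  ext i j
  simp only [Matrix.submatrix_apply, Matrix.zero_apply]
  cases h1 : finSumFinEquiv.symm i <;> cases h2 : finSumFinEquiv.symm j <;>
    simp [Matrix.fromBlocks]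

lemma aux_bd_sub (A C : Matrix (Fin k) (Fin k) ℝ) (B D : Matrix (Fin m) (Fin m) ℝ) :
    bd A B - bd C D = bd (A - C) (B - D) := by
  simp only [bd, Matrix.reindex_apply]
  ext i j
  simp only [Matrix.submatrix_apply, Matrix.sub_apply]
  cases h1 : finSumFinEquiv.symm i <;> cases h2 : finSumFinEquiv.symm j <;>
    simp [Matrix.fromBlocks]

/-- signed permutation matrix -/
noncomputable def sgnPerm (σ : Equiv.Perm (Fin m)) (d : Fin m → ℝ) : Matrix (Fin m) (Fin m) ℝ :=
  σ.permMatrix ℝ * Matrix.diagonal d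

lemma sgnPerm_apply (σ : Equiv.Perm (Fin m)) (d : Fin m → ℝ) (x y : Fin m) :
    sgnPerm σ d x y = if σ x = y then d y else 0 := by
  simp [sgnPerm, Matrix.mul_apply, Matrix.diagonal, Equiv.Perm.permMatrix, PEquiv.toMatrix,
    Equiv.toPEquiv, Finset.sum_ite_eq]

lemma sgnPerm_mem (σ : Equiv.Perm (Fin m)) (d : Fin m → ℝ) (hd : ∀ x, d x = 1 ∨ d x = -1) :
    sgnPerm σ d ∈ Matrix.orthogonalGroup (Fin m) ℝ := by
  rw [Matrix.mem_orthogonalGroup_iff]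
  ext x y
  simp only [Matrix.mul_apply, Matrix.star_eq_conjTranspose, Matrix.conjTranspose_apply,
    star_trivial, Matrix.transpose_apply, sgnPerm_apply, Matrix.one_apply, mul_ite, ite_mul, zero_mul, mul_zero]
  rw [Finset.sum_ite_eq (Finset.univ) (σ y)]
  simp only [Finset.mem_univ, if_true]
  by_cases h : x = y
  · subst h
    simp
    rcases hd (σ x) with h' | h' <;> rw [h'] <;> norm_num
  · rw [if_neg (fun hc => h (σ.injective hc)), if_neg h]

lemma sgnPerm_det (σ : Equiv.Perm (Fin m)) (d : Fin m → ℝ) :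
    (sgnPerm σ d).det = (Equiv.Perm.sign σ : ℝ) * ∏ x, d x := by
  simp [sgnPerm, Matrix.det_permutation]

lemma aux_std_apply (i j x y : Fin m) (c : ℝ) :
    Matrix.single i j c x y = if i = x ∧ j = y then c else 0 := rfl

lemma aux_idA (p q : Fin m) (hpq : p ≠ q) :
    Matrix.single p p (1:ℝ) + Matrix.single q q 1 =
      (-2 : ℝ)⁻¹ • (sgnPerm 1 (fun x => if x = p ∨ x = q then -1 else 1) - 1) := by
  have hpq' : (p:ℕ) ≠ (q:ℕ) := fun h => hpq (Fin.ext h)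
  ext x y
  simp only [Matrix.add_apply, Matrix.smul_apply, Matrix.sub_apply, sgnPerm_apply,
    Matrix.one_apply, aux_std_apply, smul_eq_mul]
  split_ifs <;> simp_all <;> first | (exfalso; fin_omega) | norm_num

lemma aux_idB (p q : Fin m) (hpq : p ≠ q) :
    Matrix.single p q (1:ℝ) - Matrix.single q p 1 =
      (2 : ℝ)⁻¹ • (sgnPerm (Equiv.swap p q) (fun x => if x = p then -1 else 1)
        - sgnPerm (Equiv.swap p q) (fun x => if x = q then -1 else 1)) := by
  have hpq' : (p:ℕ) ≠ (q:ℕ) := fun h => hpq (Fin.ext h)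
  ext x y
  simp only [Matrix.sub_apply, Matrix.smul_apply, sgnPerm_apply, aux_std_apply, smul_eq_mul,
    Equiv.swap_apply_def]
  split_ifs <;> first | (exfalso; fin_omega) | norm_num

lemma aux_idC (p q r : Fin m) (hpq : p ≠ q) (hpr : p ≠ r) (hqr : q ≠ r) :
    Matrix.single p q (1:ℝ) + Matrix.single q p 1 =
      (sgnPerm (Equiv.swap p q) (fun x => if x = r then -1 else 1) - 1)
        + (Matrix.single p p 1 + Matrix.single q q 1)
        + (2:ℝ) • Matrix.single r r 1 := by
  have hpq' : (p:ℕ) ≠ (q:ℕ) := fun h => hpq (Fin.ext h)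
  have hpr' : (p:ℕ) ≠ (r:ℕ) := fun h => hpr (Fin.ext h)
  have hqr' : (q:ℕ) ≠ (r:ℕ) := fun h => hqr (Fin.ext h)
  ext x y
  simp only [Matrix.add_apply, Matrix.sub_apply, Matrix.smul_apply, sgnPerm_apply,
    Matrix.one_apply, aux_std_apply, smul_eq_mul, Equiv.swap_apply_def]
  split_ifs <;> first | (exfalso; fin_omega) | norm_num

lemma aux_prodA (p q : Fin m) (hpq : p ≠ q) :
    ∏ x, (if x = p ∨ x = q then (-1:ℝ) else 1) = 1 := by
  rw [← Finset.prod_subset (Finset.subset_univ ({p, q} : Finset (Fin m)))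
    (by intro x _ hx; simp only [Finset.mem_insert, Finset.mem_singleton] at hx
        simp [not_or.mp hx])]
  rw [Finset.prod_pair hpq]
  norm_num

lemma aux_prodC (r : Fin m) :
    ∏ x, (if x = r then (-1:ℝ) else 1) = -1 := by
  rw [← Finset.prod_subset (Finset.subset_univ ({r} : Finset (Fin m)))
    (by intro x _ hx; simp only [Finset.mem_singleton] at hx; simp [hx])]
  simp

lemma aux_exists_third (hm : 3 ≤ m) (p q : Fin m) : ∃ r : Fin m, r ≠ p ∧ r ≠ q := by
  have hcard : ({p, q} : Finset (Fin m)).card ≤ 2 :=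
    le_trans (Finset.card_insert_le _ _) (by simp)
  have hpos : 0 < ({p, q}ᶜ : Finset (Fin m)).card := by
    rw [Finset.card_compl]
    simp only [Fintype.card_fin]
    omega
  obtain ⟨r, hr⟩ := Finset.card_pos.mp hpos
  rw [Finset.mem_compl, Finset.mem_insert, Finset.mem_singleton] at hr
  exact ⟨r, not_or.mp hr⟩

end AuxSpan

theorem stmt19 (k m : ℕ) (hk : 1 < k) (hm : 3 ≤ m) :
    (Submodule.span ℝ {X : Matrix (Fin (k + m)) (Fin (k + m)) ℝ |
        ∃ a : ℝ, 0 < a ∧ ∃ P : Matrix (Fin m) (Fin m) ℝ,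
          P ∈ Matrix.orthogonalGroup (Fin m) ℝ ∧ P.det = 1 ∧
          X = a • bd (1 : Matrix (Fin k) (Fin k) ℝ) P} :
        Set (Matrix (Fin (k + m)) (Fin (k + m)) ℝ)) =
      {X | ∃ (c : ℝ) (X₂ : Matrix (Fin m) (Fin m) ℝ),
        X = bd (c • (1 : Matrix (Fin k) (Fin k) ℝ)) X₂} := by
  set S : Set (Matrix (Fin (k + m)) (Fin (k + m)) ℝ) :=
    {X | ∃ a : ℝ, 0 < a ∧ ∃ P : Matrix (Fin m) (Fin m) ℝ,
      P ∈ Matrix.orthogonalGroup (Fin m) ℝ ∧ P.det = 1 ∧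
      X = a • bd (1 : Matrix (Fin k) (Fin k) ℝ) P} with hSdef
  -- the target subspace
  set W : Submodule ℝ (Matrix (Fin (k + m)) (Fin (k + m)) ℝ) :=
    { carrier := {X | ∃ (c : ℝ) (X₂ : Matrix (Fin m) (Fin m) ℝ),
        X = bd (c • (1 : Matrix (Fin k) (Fin k) ℝ)) X₂},
      add_mem' := by
        rintro a b ⟨c, Y, rfl⟩ ⟨c', Y', rfl⟩
        exact ⟨c + c', Y + Y', by rw [aux_bd_add, add_smul]⟩
      zero_mem' := ⟨0, 0, by rw [zero_smul, aux_bd_zero]⟩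
      smul_mem' := by
        rintro r a ⟨c, Y, rfl⟩
        exact ⟨r * c, r • Y, by rw [aux_bd_smul, smul_smul]⟩ } with hWdef
  -- membership of generators
  have hGen : ∀ P : Matrix (Fin m) (Fin m) ℝ, P ∈ Matrix.orthogonalGroup (Fin m) ℝ →
      P.det = 1 → bd (1 : Matrix (Fin k) (Fin k) ℝ) P ∈ Submodule.span ℝ S := by
    intro P hP hdet
    exact Submodule.subset_span ⟨1, one_pos, P, hP, hdet, (one_smul _ _).symm⟩
  have h1og : (1 : Matrix (Fin m) (Fin m) ℝ) ∈ Matrix.orthogonalGroup (Fin m) ℝ := by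
    rw [Matrix.mem_orthogonalGroup_iff]; simp
  have h1mem : bd (1 : Matrix (Fin k) (Fin k) ℝ) (1 : Matrix (Fin m) (Fin m) ℝ) ∈
      Submodule.span ℝ S := hGen 1 h1og (by simp)
  -- the submodule of m×m matrices Y with bd 0 Y in the span
  set T : Submodule ℝ (Matrix (Fin m) (Fin m) ℝ) :=
    { carrier := {Y | bd (0 : Matrix (Fin k) (Fin k) ℝ) Y ∈ Submodule.span ℝ S},
      add_mem' := by
        intro a b ha hb
        simp only [Set.mem_setOf_eq] at ha hb ⊢
        have h := Submodule.add_mem (Submodule.span ℝ S) ha hb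
        rwa [aux_bd_add, add_zero] at h
      zero_mem' := by
        show bd (0 : Matrix (Fin k) (Fin k) ℝ) (0 : Matrix (Fin m) (Fin m) ℝ) ∈
          Submodule.span ℝ S
        rw [aux_bd_zero]; exact Submodule.zero_mem _
      smul_mem' := by
        intro r a ha
        simp only [Set.mem_setOf_eq] at ha ⊢
        have h := Submodule.smul_mem (Submodule.span ℝ S) r ha
        rwa [aux_bd_smul, smul_zero] at h } with hTdef
  have hTmem : ∀ Y : Matrix (Fin m) (Fin m) ℝ,
      (Y ∈ T ↔ bd (0 : Matrix (Fin k) (Fin k) ℝ) Y ∈ Submodule.span ℝ S) := fun _ => Iff.rfl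
  -- differences of special orthogonal matrices lie in T
  have hdiffT : ∀ P Q : Matrix (Fin m) (Fin m) ℝ,
      P ∈ Matrix.orthogonalGroup (Fin m) ℝ → P.det = 1 →
      Q ∈ Matrix.orthogonalGroup (Fin m) ℝ → Q.det = 1 → P - Q ∈ T := by
    intro P Q hP hPd hQ hQd
    rw [hTmem]
    have h : bd (0 : Matrix (Fin k) (Fin k) ℝ) (P - Q) =
        bd (1 : Matrix (Fin k) (Fin k) ℝ) P - bd 1 Q := by
      rw [aux_bd_sub, sub_self]
    rw [h]
    exact Submodule.sub_mem _ (hGen P hP hPd) (hGen Q hQ hQd)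
  -- sign-value check helper
  have hdvalA : ∀ p q : Fin m, ∀ x, (if x = p ∨ x = q then (-1:ℝ) else 1) = 1 ∨
      (if x = p ∨ x = q then (-1:ℝ) else 1) = -1 := by
    intro p q x; split_ifs <;> simp
  have hdvalC : ∀ r : Fin m, ∀ x, (if x = r then (-1:ℝ) else 1) = 1 ∨
      (if x = r then (-1:ℝ) else 1) = -1 := by
    intro r x; split_ifs <;> simp
  -- diagonal pairs in T
  have hDiagPair : ∀ p q : Fin m, p ≠ q →
      Matrix.single p p (1:ℝ) + Matrix.single q q 1 ∈ T := by
    intro p q hpq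
    have hmem : sgnPerm 1 (fun x => if x = p ∨ x = q then (-1:ℝ) else 1) - 1 ∈ T := by
      have h1 : (1 : Matrix (Fin m) (Fin m) ℝ) = sgnPerm 1 (fun _ => 1) := by
        ext x y
        rw [sgnPerm_apply]
        simp [Matrix.one_apply]
        split_ifs with h <;> simp [h]
      refine hdiffT _ _ (sgnPerm_mem _ _ (hdvalA p q)) ?_ h1og (by simp)
      rw [sgnPerm_det, aux_prodA p q hpq]
      simp
    rw [aux_idA p q hpq]
    exact Submodule.smul_mem _ _ hmem
  -- single diagonal entries in T
  have hDiagSingle : ∀ p : Fin m, Matrix.single p p (1:ℝ) ∈ T := by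
    intro p
    obtain ⟨q, hqp, -⟩ := aux_exists_third hm p p
    obtain ⟨r, hrp, hrq⟩ := aux_exists_third hm p q
    have h1 := hDiagPair p q (Ne.symm hqp)
    have h2 := hDiagPair p r (Ne.symm hrp)
    have h3 := hDiagPair q r (Ne.symm hrq)
    have key : Matrix.single p p (1:ℝ) = (2:ℝ)⁻¹ •
        ((Matrix.single p p (1:ℝ) + Matrix.single q q 1) +
         ((Matrix.single p p (1:ℝ) + Matrix.single r r 1) -
          (Matrix.single q q (1:ℝ) + Matrix.single r r 1))) := by
      ext x y
      simp only [Matrix.smul_apply, Matrix.add_apply, Matrix.sub_apply, smul_eq_mul]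
      ring
    rw [key]
    exact Submodule.smul_mem _ _
      (Submodule.add_mem _ h1 (Submodule.sub_mem _ h2 h3))
  -- all standard basis matrices in T
  have hStd : ∀ p q : Fin m, Matrix.single p q (1:ℝ) ∈ T := by
    intro p q
    rcases eq_or_ne p q with rfl | hpq
    · exact hDiagSingle p
    obtain ⟨r, hrp, hrq⟩ := aux_exists_third hm p q
    have hswapmemB : sgnPerm (Equiv.swap p q) (fun x => if x = p then (-1:ℝ) else 1)
        - sgnPerm (Equiv.swap p q) (fun x => if x = q then (-1:ℝ) else 1) ∈ T := by
      refine hdiffT _ _ (sgnPerm_mem _ _ (fun x => by split_ifs <;> simp)) ?_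
        (sgnPerm_mem _ _ (fun x => by split_ifs <;> simp)) ?_ <;>
      · rw [sgnPerm_det, aux_prodC]
        rw [Equiv.Perm.sign_swap hpq]
        norm_num
    have hskew : Matrix.single p q (1:ℝ) - Matrix.single q p 1 ∈ T := by
      rw [aux_idB p q hpq]
      exact Submodule.smul_mem _ _ hswapmemB
    have hswapmemC : sgnPerm (Equiv.swap p q) (fun x => if x = r then (-1:ℝ) else 1)
        - 1 ∈ T := by
      refine hdiffT _ _ (sgnPerm_mem _ _ (hdvalC r)) ?_ h1og (by simp)
      rw [sgnPerm_det, aux_prodC]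
      rw [Equiv.Perm.sign_swap hpq]
      norm_num
    have hsym : Matrix.single p q (1:ℝ) + Matrix.single q p 1 ∈ T := by
      rw [aux_idC p q r hpq (Ne.symm hrp) (Ne.symm hrq)]
      refine Submodule.add_mem _ (Submodule.add_mem _ hswapmemC (hDiagPair p q hpq)) ?_
      exact Submodule.smul_mem _ _ (hDiagSingle r)
    have key : Matrix.single p q (1:ℝ) = (2:ℝ)⁻¹ •
        ((Matrix.single p q (1:ℝ) + Matrix.single q p 1) +
         (Matrix.single p q (1:ℝ) - Matrix.single q p 1)) := by
      ext x y
      simp only [Matrix.smul_apply, Matrix.add_apply, Matrix.sub_apply, smul_eq_mul]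
      ring
    rw [key]
    exact Submodule.smul_mem _ _ (Submodule.add_mem _ hsym hskew)
  -- T is everything
  have hTtop : ∀ Y : Matrix (Fin m) (Fin m) ℝ, Y ∈ T := by
    intro Y
    rw [Matrix.matrix_eq_sum_single Y]
    refine Submodule.sum_mem _ (fun i _ => Submodule.sum_mem _ (fun j _ => ?_))
    have h : Matrix.single i j (Y i j) = (Y i j) • Matrix.single i j (1:ℝ) := by
      rw [Matrix.smul_single, smul_eq_mul, mul_one]
    rw [h]
    exact Submodule.smul_mem _ _ (hStd i j)
  -- span = W
  have hle : Submodule.span ℝ S ≤ W := by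
    rw [Submodule.span_le]
    rintro X ⟨a, -, P, -, -, rfl⟩
    exact ⟨a, a • P, by rw [aux_bd_smul]⟩
  have hge : W ≤ Submodule.span ℝ S := by
    rintro X ⟨c, X₂, rfl⟩
    have h : bd (c • (1 : Matrix (Fin k) (Fin k) ℝ)) X₂ =
        c • bd (1 : Matrix (Fin k) (Fin k) ℝ) (1 : Matrix (Fin m) (Fin m) ℝ) +
          bd (0 : Matrix (Fin k) (Fin k) ℝ) (X₂ - c • 1) := by
      have he : c • (1 : Matrix (Fin m) (Fin m) ℝ) + (X₂ - c • 1) = X₂ := by abel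
      rw [aux_bd_smul, aux_bd_add, add_zero, he]
    rw [h]
    exact Submodule.add_mem _ (Submodule.smul_mem _ _ h1mem) (hTtop (X₂ - c • 1))
  have hspan : Submodule.span ℝ S = W := le_antisymm hle hge
  rw [hspan]
  rfl
end
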